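/- Let p ≥ 3 be prime, a, b ∈ E_p with b ≠ 1, and let x₁ ∈ ℚ_p be a fixed point of g(u) = a(b²u² + 1)/(b² + u²) with x₁ ∉ E_p. Then |g'(x₁)|_p = 1/|b − 1|_p ≥ p; i.e., x₁ is a repelling fixed point. -/

import Mathlib

/-!
The fixed-point equation forces `x₁` to be a unit and rearranges to
`(a - x₁)(b² + x₁²) = -a(b² - 1)(x₁² - 1)`. As `x₁ ∉ E_p`, `a - x₁` is a unit; so is `x₁² - 1`,
for otherwise `b² + x₁² ≡ b² + 1 ≡ 2` would be a unit while the right side is divisible by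
`b - 1`. Hence `|b² + x₁²| = |b - 1| = |b⁴ - 1|`, and `g'(x₁) = 2a x₁ (b⁴ - 1)/(b² + x₁²)²` has
absolute value `|b - 1|⁻¹`.
-/

theorem IsUltrametricDist.norm_eq_of_norm_sub_lt {E : Type*} [SeminormedAddCommGroup E]
    [IsUltrametricDist E] {x y : E} (h : ‖x - y‖ < ‖y‖) : ‖x‖ = ‖y‖ := by
  simpa [max_eq_right h.le] using norm_add_eq_max_of_norm_ne_norm h.ne

theorem Padic.norm_two {p : ℕ} [hp : Fact p.Prime] (hp2 : p ≠ 2) : ‖(2 : ℚ_[p])‖ = 1 := by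
  exact_mod_cast Padic.norm_natCast_eq_one_iff.mpr
    ((Nat.coprime_primes hp.out Nat.prime_two).mpr hp2)

theorem Padic.norm_le_inv_of_norm_lt_one {p : ℕ} [Fact p.Prime] {x : ℚ_[p]} (h : ‖x‖ < 1) :
    ‖x‖ ≤ (p : ℝ)⁻¹ := by
  simpa using (Padic.norm_le_pow_iff_norm_lt_pow_add_one x (-1)).mpr (by simpa using h)

open IsUltrametricDist

section Ultrametric

variable {K : Type*} [NormedField K] [IsUltrametricDist K]

theorem norm_eq_one_of_norm_sub_one_lt_one {a : K} (ha : ‖a - 1‖ < 1) : ‖a‖ = 1 := by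
  simpa using norm_eq_of_norm_sub_lt (y := (1 : K)) (by simpa using ha)

theorem norm_add_one_of_norm_sub_one_lt_one {b : K} (h2 : ‖(2 : K)‖ = 1) (hb : ‖b - 1‖ < 1) :
    ‖b + 1‖ = 1 :=
  h2 ▸ norm_eq_of_norm_sub_lt (by rwa [show b + 1 - 2 = b - 1 by ring, h2])

theorem norm_sq_sub_one_of_norm_sub_one_lt_one {b : K} (h2 : ‖(2 : K)‖ = 1) (hb : ‖b - 1‖ < 1) :
    ‖b ^ 2 - 1‖ = ‖b - 1‖ := by
  rw [show b ^ 2 - 1 = (b - 1) * (b + 1) by ring, norm_mul,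
    norm_add_one_of_norm_sub_one_lt_one h2 hb, mul_one]

theorem norm_pow_four_sub_one_of_norm_sub_one_lt_one {b : K} (h2 : ‖(2 : K)‖ = 1)
    (hb : ‖b - 1‖ < 1) : ‖b ^ 4 - 1‖ = ‖b - 1‖ := by
  have hb2 := norm_sq_sub_one_of_norm_sub_one_lt_one h2 hb
  rw [show b ^ 4 = (b ^ 2) ^ 2 by ring, norm_sq_sub_one_of_norm_sub_one_lt_one h2 (hb2 ▸ hb), hb2]

theorem norm_sub_one_le_one_of_norm_eq_one {x : K} (hx : ‖x‖ = 1) : ‖x - 1‖ ≤ 1 := by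
  simpa [sub_eq_add_neg, hx] using norm_add_le_max x (-1)

theorem norm_eq_one_of_isFixedPt {a b x : K} (ha : ‖a‖ = 1) (hb : ‖b‖ = 1)
    (hfix : a * (b ^ 2 * x ^ 2 + 1) = x * (b ^ 2 + x ^ 2)) : ‖x‖ = 1 := by
  have hnorm := congrArg norm hfix
  simp only [norm_mul, ha, one_mul] at hnorm
  rcases lt_trichotomy ‖x‖ 1 with hx | hx | hx
  · have hx2 : ‖x‖ ^ 2 < 1 := pow_lt_one₀ (norm_nonneg x) hx two_ne_zero
    have hnum : ‖b ^ 2 * x ^ 2 + 1‖ = 1 :=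
      norm_one (α := K) ▸ norm_eq_of_norm_sub_lt (by simpa [norm_mul, hb] using hx2)
    have hden : ‖b ^ 2 + x ^ 2‖ = 1 := by
      rw [norm_eq_of_norm_sub_lt (y := b ^ 2) (by simpa [hb] using hx2), norm_pow, hb, one_pow]
    rw [hnum, hden, mul_one] at hnorm
    linarith
  · exact hx
  · have hx2 : 1 < ‖x‖ ^ 2 := one_lt_pow₀ hx two_ne_zero
    have hnum : ‖b ^ 2 * x ^ 2 + 1‖ = ‖x‖ ^ 2 := by
      rw [norm_eq_of_norm_sub_lt (y := b ^ 2 * x ^ 2) (by simpa [norm_mul, hb] using hx2)]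
      simp [norm_mul, hb]
    have hden : ‖b ^ 2 + x ^ 2‖ = ‖x‖ ^ 2 := by
      rw [norm_eq_of_norm_sub_lt (y := x ^ 2) (by simpa [hb] using hx2), norm_pow]
    rw [hnum, hden] at hnorm
    nlinarith

theorem norm_sq_add_sq_of_isFixedPt {a b x : K} (h2 : ‖(2 : K)‖ = 1) (ha : ‖a - 1‖ < 1)
    (hb : ‖b - 1‖ < 1) (hfix : a * (b ^ 2 * x ^ 2 + 1) = x * (b ^ 2 + x ^ 2)) (hx : ‖x‖ = 1)
    (hxE : 1 ≤ ‖x - 1‖) : ‖b ^ 2 + x ^ 2‖ = ‖b - 1‖ := by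
  have hx_sub : ‖x - 1‖ = 1 :=
    le_antisymm (norm_sub_one_le_one_of_norm_eq_one hx) hxE
  have hax : ‖a - x‖ = 1 := by
    rw [norm_eq_of_norm_sub_lt (y := 1 - x)
      (by rwa [show a - x - (1 - x) = a - 1 by ring, norm_sub_rev 1 x, hx_sub]),
      norm_sub_rev, hx_sub]
  have hprod : ‖b ^ 2 + x ^ 2‖ = ‖b - 1‖ * ‖x ^ 2 - 1‖ := by
    have := congrArg norm
      (show (a - x) * (b ^ 2 + x ^ 2) = -(a * ((b ^ 2 - 1) * (x ^ 2 - 1))) by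
        linear_combination hfix)
    simpa [norm_mul, hax, norm_eq_one_of_norm_sub_one_lt_one ha,
      norm_sq_sub_one_of_norm_sub_one_lt_one h2 hb] using this
  have hx2 : ‖x ^ 2 - 1‖ = 1 := by
    refine le_antisymm (norm_sub_one_le_one_of_norm_eq_one (by rw [norm_pow, hx, one_pow]))
      (not_lt.mp fun hlt => ?_)
    have hb2 : ‖b ^ 2 + 1‖ = 1 := norm_add_one_of_norm_sub_one_lt_one h2
      (norm_sq_sub_one_of_norm_sub_one_lt_one h2 hb ▸ hb)
    have : ‖b ^ 2 + x ^ 2‖ = 1 := by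
      rwa [norm_eq_of_norm_sub_lt (y := b ^ 2 + 1)
        (by rwa [show b ^ 2 + x ^ 2 - (b ^ 2 + 1) = x ^ 2 - 1 by ring, hb2])]
    rw [hprod] at this
    nlinarith [norm_nonneg (b - 1), norm_nonneg (x ^ 2 - 1)]
  rw [hprod, hx2, mul_one]

end Ultrametric

theorem hasDerivAt_div_sq_add_sq {K : Type*} [NontriviallyNormedField K] (a b x : K)
    (hx : b ^ 2 + x ^ 2 ≠ 0) :
    HasDerivAt (fun u => a * (b ^ 2 * u ^ 2 + 1) / (b ^ 2 + u ^ 2))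
      (2 * a * x * (b ^ 4 - 1) / (b ^ 2 + x ^ 2) ^ 2) x := by
  have hsq : HasDerivAt (fun u : K => u ^ 2) (2 * x) x := by simpa using hasDerivAt_pow 2 x
  exact ((((hsq.const_mul (b ^ 2)).add_const 1).const_mul a).fun_div (hsq.const_add (b ^ 2))
    hx).congr_deriv (by ring)

theorem norm_deriv_eq_inv_norm_sub_one_of_isFixedPt {K : Type*} [NontriviallyNormedField K]
    [IsUltrametricDist K] {a b x : K} (h2 : ‖(2 : K)‖ = 1) (ha : ‖a - 1‖ < 1)
    (hb : ‖b - 1‖ < 1) (hb1 : b ≠ 1) (hd : b ^ 2 + x ^ 2 ≠ 0)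
    (hfix : a * (b ^ 2 * x ^ 2 + 1) / (b ^ 2 + x ^ 2) = x) (hxE : 1 ≤ ‖x - 1‖) :
    ‖deriv (fun u => a * (b ^ 2 * u ^ 2 + 1) / (b ^ 2 + u ^ 2)) x‖ = ‖b - 1‖⁻¹ := by
  rw [div_eq_iff hd] at hfix
  have hx := norm_eq_one_of_isFixedPt (norm_eq_one_of_norm_sub_one_lt_one ha)
    (norm_eq_one_of_norm_sub_one_lt_one hb) hfix
  have hb1' : ‖b - 1‖ ≠ 0 := norm_ne_zero_iff.mpr (sub_ne_zero.mpr hb1)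
  rw [(hasDerivAt_div_sq_add_sq a b x hd).deriv, norm_div, norm_mul, norm_mul, norm_mul, norm_pow,
    h2, norm_eq_one_of_norm_sub_one_lt_one ha, hx,
    norm_pow_four_sub_one_of_norm_sub_one_lt_one h2 hb,
    norm_sq_add_sq_of_isFixedPt h2 ha hb hfix hx hxE]
  field_simp

theorem stmt14 (p : ℕ) [Fact p.Prime] (hp : 3 ≤ p) (a b : ℚ_[p])
    (ha : ‖a - 1‖ < 1) (hb : ‖b - 1‖ < 1) (hb1 : b ≠ 1) (x₁ : ℚ_[p])
    (hd : b ^ 2 + x₁ ^ 2 ≠ 0)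
    (hfix1 : a * (b ^ 2 * x₁ ^ 2 + 1) / (b ^ 2 + x₁ ^ 2) = x₁)
    (hnotE : ¬ ‖x₁ - 1‖ < 1) :
    ‖deriv (fun u : ℚ_[p] => a * (b ^ 2 * u ^ 2 + 1) / (b ^ 2 + u ^ 2)) x₁‖
      = ‖b - 1‖⁻¹ ∧
    (p : ℝ) ≤ ‖deriv (fun u : ℚ_[p] => a * (b ^ 2 * u ^ 2 + 1) / (b ^ 2 + u ^ 2)) x₁‖ := by
  have hderiv := norm_deriv_eq_inv_norm_sub_one_of_isFixedPt (Padic.norm_two (by omega)) ha hb hb1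
    hd hfix1 (not_lt.mp hnotE)
  refine ⟨hderiv, ?_⟩
  rw [hderiv, le_inv_comm₀ (by exact_mod_cast (Fact.out : p.Prime).pos)
    (norm_pos_iff.mpr (sub_ne_zero.mpr hb1))]
  exact Padic.norm_le_inv_of_norm_lt_one hb
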